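/- Let m, N_L, N_R be positive integers, let w ∈ ℝ^{m×(N_L+N_R)} be a fixed weight matrix, let μ_1, …, μ_{N_L+N_R} ∈ ℝ^m be centers, let α_1, …, α_{N_L+N_R} ∈ (0,∞)^m be fixed strictly positive base steepness vectors, fix l ∈ {1, …, N_L}, and let y ∈ ℝ^m satisfy y_i ≠ μ_{ji} for every i = 1, …, m and every j = 1, …, N_L+N_R. For each j ≤ N_L define μ*_{lj,i} := max(μ_{li}, μ_{ji}) with α*_{lj,i} := α_{li} if μ_{li} ≥ μ_{ji} and α*_{lj,i} := α_{ji} otherwise. Then the sum of products Σ_{i=1}^m Σ_{j=1}^{N_L} tα_{li} w_{ij} Λ(y; μ_l, tα_l) Λ(y; μ_j, tα_j) + Σ_{i=1}^m Σ_{k=N_L+1}^{N_L+N_R} tα_{li} w_{ik} Λ(y; μ_l, tα_l) P(y; μ_k, tα_k), minus the weighted sum of dictionary functions Σ_{i=1}^m Σ_{j=1}^{N_L} tα_{li} w_{ij} Λ(y; μ*_{lj}, tα*_{lj}) + Σ_{i=1}^m Σ_{k=N_L+1}^{N_L+N_R} tα_{li} w_{ik} H(y; (μ_l, tα_l), (μ_k,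 tα_k)), converges to 0 exponentially as t → ∞: there exist constants C, c > 0 such that the absolute value of this difference is at most C·exp(−c·t) for all t ≥ 1. -/

import Mathlib

open MeasureTheory ProbabilityTheory Real

noncomputable def logisticFun (y μ α : ℝ) : ℝ := 1 / (1 + Real.exp (-α * (y - μ)))

noncomputable def rbfFun (y μ α : ℝ) : ℝ :=
  Real.exp (-α * (y - μ)) / (1 + Real.exp (-α * (y - μ))) ^ 2

noncomputable def conjLog {m : ℕ} (y μ α : Fin m → ℝ) : ℝ :=
  ∏ i, logisticFun (y i) (μ i) (α i)

noncomputable def conjRBF {m : ℕ} (y μ α : Fin m → ℝ) : ℝ :=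
  ∏ i, rbfFun (y i) (μ i) (α i)

open scoped Classical in
/-- Decision function `H(y; (μl, αl), (μk, αk))`. -/
noncomputable def decisionH {m : ℕ} (y μl αl μk αk : Fin m → ℝ) : ℝ :=
  if ∀ i, μl i < μk i then conjRBF y μk αk else 0

/-!
As `t → ∞`, the logistic factor `λ(y; μ, tα)` with `α > 0` tends to the indicator of `y > μ`
with error at most `exp (-tα |y - μ|)`, and `ρ = λ (1 - λ)` tends to `0` at the same rate.
Hence `λ(y; μ, tα) λ(y; μ', tα')` agrees up to an exponentially small error with the logistic
at the larger of the two centres: once `y` is past the smaller centre that factor is nearly `1`,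
and otherwise `y` lies before both centres and both sides are nearly `0`. Errors of products of
factors in `[0, 1]` add up over coordinates. A conjunctive RBF is at most any one of its factors,
so every term containing `P` or `H` is exponentially small, and the prefactor `t` does not spoil
exponential decay.
-/

open Finset

def ExpSmall (f : ℝ → ℝ) : Prop :=
  ∃ C c : ℝ, 0 < C ∧ 0 < c ∧ ∀ t : ℝ, 1 ≤ t → |f t| ≤ C * exp (-c * t)

namespace ExpSmall

variable {f g : ℝ → ℝ}

lemma of_abs_le (hg : ExpSmall g) (h : ∀ t, 1 ≤ t → |f t| ≤ |g t|) : ExpSmall f := by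
  obtain ⟨C, c, hC, hc, hg⟩ := hg
  exact ⟨C, c, hC, hc, fun t ht => (h t ht).trans (hg t ht)⟩

lemma congr (hf : ExpSmall f) (h : ∀ t, f t = g t) : ExpSmall g :=
  hf.of_abs_le fun t _ => by rw [h]

lemma exp_neg_mul {c : ℝ} (hc : 0 < c) : ExpSmall fun t => exp (-c * t) :=
  ⟨1, c, one_pos, hc, fun t _ => by rw [one_mul, abs_of_pos (exp_pos _)]⟩

lemma zero : ExpSmall 0 :=
  (exp_neg_mul one_pos).of_abs_le fun t _ => by simp [(exp_pos _).le]

lemma add (hf : ExpSmall f) (hg : ExpSmall g) : ExpSmall (f + g) := by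
  obtain ⟨C₁, c₁, hC₁, hc₁, h₁⟩ := hf
  obtain ⟨C₂, c₂, hC₂, hc₂, h₂⟩ := hg
  refine ⟨C₁ + C₂, min c₁ c₂, by positivity, lt_min hc₁ hc₂, fun t ht => ?_⟩
  calc |f t + g t| ≤ |f t| + |g t| := abs_add_le _ _
    _ ≤ C₁ * exp (-c₁ * t) + C₂ * exp (-c₂ * t) := add_le_add (h₁ t ht) (h₂ t ht)
    _ ≤ C₁ * exp (-min c₁ c₂ * t) + C₂ * exp (-min c₁ c₂ * t) := by
        gcongr
        exacts [min_le_left _ _, min_le_right _ _]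
    _ = (C₁ + C₂) * exp (-min c₁ c₂ * t) := by ring

lemma abs (hf : ExpSmall f) : ExpSmall fun t => |f t| :=
  hf.of_abs_le fun _ _ => (abs_abs _).le

lemma neg (hf : ExpSmall f) : ExpSmall (-f) :=
  hf.of_abs_le fun t _ => by simp

lemma sub (hf : ExpSmall f) (hg : ExpSmall g) : ExpSmall (f - g) := by
  simpa only [sub_eq_add_neg] using hf.add hg.neg

lemma sum {ι : Type*} (s : Finset ι) {F : ι → ℝ → ℝ} (hF : ∀ i ∈ s, ExpSmall (F i)) :
    ExpSmall fun t => ∑ i ∈ s, F i t := by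
  simpa only [← Finset.sum_apply] using Finset.sum_induction F ExpSmall (fun _ _ => add) zero hF

lemma const_mul (a : ℝ) (hf : ExpSmall f) : ExpSmall fun t => a * f t := by
  obtain ⟨C, c, hC, hc, hf⟩ := hf
  refine ⟨(|a| + 1) * C, c, by positivity, hc, fun t ht => ?_⟩
  calc |a * f t| = |a| * |f t| := abs_mul _ _
    _ ≤ (|a| + 1) * (C * exp (-c * t)) := by gcongr; exacts [by linarith, hf t ht]
    _ = (|a| + 1) * C * exp (-c * t) := by ring

lemma id_mul (hf : ExpSmall f) : ExpSmall fun t => t * f t := by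
  obtain ⟨C, c, hC, hc, hf⟩ := hf
  refine ⟨2 / c * C, c / 2, by positivity, by positivity, fun t ht => ?_⟩
  have ht_le : t ≤ 2 / c * exp (c / 2 * t) := by
    have := add_one_le_exp (c / 2 * t)
    rw [div_mul_eq_mul_div, le_div_iff₀' hc]
    linarith
  calc |t * f t| = t * |f t| := by rw [abs_mul, abs_of_nonneg (by linarith)]
    _ ≤ 2 / c * exp (c / 2 * t) * (C * exp (-c * t)) := by gcongr; exact hf t ht
    _ = 2 / c * C * exp (-(c / 2) * t) := by
        rw [mul_mul_mul_comm, ← exp_add]; ring_nf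

end ExpSmall

section Logistic

variable (y μ α : ℝ)

lemma logisticFun_nonneg : 0 ≤ logisticFun y μ α := by
  unfold logisticFun; positivity

lemma logisticFun_le_one : logisticFun y μ α ≤ 1 := by
  unfold logisticFun
  rw [div_le_one (by positivity)]
  linarith [exp_pos (-α * (y - μ))]

lemma logisticFun_le_exp : logisticFun y μ α ≤ exp (α * (y - μ)) :=
  calc logisticFun y μ α ≤ 1 / exp (-α * (y - μ)) :=
        one_div_le_one_div_of_le (exp_pos _) (by linarith)
    _ = exp (α * (y - μ)) := by rw [one_div, ← exp_neg]; ring_nf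

lemma one_sub_logisticFun_le_exp : 1 - logisticFun y μ α ≤ exp (-α * (y - μ)) := by
  have hE := exp_pos (-α * (y - μ))
  have : 1 - logisticFun y μ α = exp (-α * (y - μ)) / (1 + exp (-α * (y - μ))) := by
    rw [logisticFun]; field_simp; ring
  rw [this]
  exact div_le_self hE.le (by linarith)

lemma rbfFun_eq_logisticFun_mul : rbfFun y μ α = logisticFun y μ α * (1 - logisticFun y μ α) := by
  have hE := exp_pos (-α * (y - μ))
  rw [rbfFun, logisticFun]
  field_simp
  ring

lemma rbfFun_nonneg : 0 ≤ rbfFun y μ α := by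
  unfold rbfFun; positivity

lemma rbfFun_le_one : rbfFun y μ α ≤ 1 := by
  have h₀ := logisticFun_nonneg y μ α
  have h₁ := logisticFun_le_one y μ α
  rw [rbfFun_eq_logisticFun_mul]
  nlinarith

end Logistic

section Steepening

variable {y μ α : ℝ}

lemma expSmall_logisticFun (hα : 0 < α) (h : y < μ) :
    ExpSmall fun t => logisticFun y μ (t * α) :=
  (ExpSmall.exp_neg_mul (mul_pos hα (sub_pos.2 h))).of_abs_le fun t _ => by
    rw [abs_of_nonneg (logisticFun_nonneg ..), abs_of_pos (exp_pos _)]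
    convert logisticFun_le_exp y μ (t * α) using 2
    ring

lemma expSmall_one_sub_logisticFun (hα : 0 < α) (h : μ < y) :
    ExpSmall fun t => 1 - logisticFun y μ (t * α) :=
  (ExpSmall.exp_neg_mul (mul_pos hα (sub_pos.2 h))).of_abs_le fun t _ => by
    rw [abs_of_nonneg (sub_nonneg.2 (logisticFun_le_one ..)), abs_of_pos (exp_pos _)]
    convert one_sub_logisticFun_le_exp y μ (t * α) using 2
    ring

lemma expSmall_rbfFun (hα : 0 < α) (hy : y ≠ μ) : ExpSmall fun t => rbfFun y μ (t * α) := by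
  have hnn (t : ℝ) := logisticFun_nonneg y μ (t * α)
  have hle (t : ℝ) := logisticFun_le_one y μ (t * α)
  rcases hy.lt_or_gt with h | h
  · refine (expSmall_logisticFun hα h).of_abs_le fun t _ => ?_
    rw [abs_of_nonneg (rbfFun_nonneg ..), abs_of_nonneg (hnn t), rbfFun_eq_logisticFun_mul]
    exact mul_le_of_le_one_right (hnn t) (by linarith [hnn t])
  · refine (expSmall_one_sub_logisticFun hα h).of_abs_le fun t _ => ?_
    rw [abs_of_nonneg (rbfFun_nonneg ..), abs_of_nonneg (by linarith [hle t]),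
      rbfFun_eq_logisticFun_mul]
    exact mul_le_of_le_one_left (by linarith [hle t]) (hle t)

lemma expSmall_logisticFun_mul_sub_of_le {μ' α' : ℝ} (hα : 0 < α) (hα' : 0 < α')
    (hμ : μ' ≤ μ) (hy : y ≠ μ') :
    ExpSmall fun t =>
      logisticFun y μ (t * α) * logisticFun y μ' (t * α') - logisticFun y μ (t * α) := by
  have h₀ (t : ℝ) := logisticFun_nonneg y μ (t * α)
  have h₁ (t : ℝ) := logisticFun_le_one y μ (t * α)
  have h₀' (t : ℝ) := logisticFun_nonneg y μ' (t * α')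
  have h₁' (t : ℝ) := logisticFun_le_one y μ' (t * α')
  have habs (t : ℝ) :
      |logisticFun y μ (t * α) * logisticFun y μ' (t * α') - logisticFun y μ (t * α)|
        = logisticFun y μ (t * α) * (1 - logisticFun y μ' (t * α')) := by
    rw [← abs_neg, neg_sub, ← mul_one_sub]
    exact abs_of_nonneg (mul_nonneg (h₀ t) (by linarith [h₁' t]))
  rcases hy.lt_or_gt with h | h
  · refine (expSmall_logisticFun hα (h.trans_le hμ)).of_abs_le fun t _ => ?_
    rw [habs, abs_of_nonneg (h₀ t)]
    exact mul_le_of_le_one_right (h₀ t) (by linarith [h₀' t])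
  · refine (expSmall_one_sub_logisticFun hα' h).of_abs_le fun t _ => ?_
    rw [habs, abs_of_nonneg (by linarith [h₁' t])]
    exact mul_le_of_le_one_left (by linarith [h₁' t]) (h₁ t)

lemma expSmall_logisticFun_mul_sub_max {μ' α' : ℝ} (hα : 0 < α) (hα' : 0 < α')
    (hy : y ≠ μ) (hy' : y ≠ μ') :
    ExpSmall fun t => logisticFun y μ (t * α) * logisticFun y μ' (t * α')
      - logisticFun y (max μ μ') (t * if μ' ≤ μ then α else α') := by
  by_cases h : μ' ≤ μ
  · simpa only [h, max_eq_left, if_true] using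
      expSmall_logisticFun_mul_sub_of_le hα hα' h hy'
  · have hlt := (not_le.1 h).le
    simp only [h, max_eq_right hlt, if_false]
    exact (expSmall_logisticFun_mul_sub_of_le hα' hα hlt hy).congr fun t => by ring

end Steepening

lemma norm_prod_sub_prod_le {ι R : Type*} [NormedCommRing R] [NormOneClass R] (s : Finset ι)
    {a b : ι → R} (ha : ∀ i ∈ s, ‖a i‖ ≤ 1) (hb : ∀ i ∈ s, ‖b i‖ ≤ 1) :
    ‖∏ i ∈ s, a i - ∏ i ∈ s, b i‖ ≤ ∑ i ∈ s, ‖a i - b i‖ := by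
  classical
  induction s using Finset.induction_on with
  | empty => simp
  | insert x s hx ih =>
    rw [forall_mem_insert] at ha hb
    rw [prod_insert hx, prod_insert hx, sum_insert hx]
    have hB : ‖∏ i ∈ s, b i‖ ≤ 1 :=
      (Finset.norm_prod_le _ _).trans (prod_le_one (fun _ _ => norm_nonneg _) hb.2)
    calc ‖a x * ∏ i ∈ s, a i - b x * ∏ i ∈ s, b i‖
        = ‖a x * (∏ i ∈ s, a i - ∏ i ∈ s, b i) + (a x - b x) * ∏ i ∈ s, b i‖ := by ring_nf
      _ ≤ ‖a x‖ * ‖∏ i ∈ s, a i - ∏ i ∈ s, b i‖ + ‖a x - b x‖ * ‖∏ i ∈ s, b i‖ :=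
        (norm_add_le _ _).trans (add_le_add (norm_mul_le _ _) (norm_mul_le _ _))
      _ ≤ 1 * ∑ i ∈ s, ‖a i - b i‖ + ‖a x - b x‖ * 1 := by
        gcongr
        exacts [ha.1, ih ha.2 hb.2]
      _ = ‖a x - b x‖ + ∑ i ∈ s, ‖a i - b i‖ := by ring

section Conjunctive

variable {m : ℕ} (y μ α : Fin m → ℝ)

lemma conjLog_nonneg : 0 ≤ conjLog y μ α :=
  prod_nonneg fun _ _ => logisticFun_nonneg ..

lemma conjLog_le_one : conjLog y μ α ≤ 1 :=
  prod_le_one (fun _ _ => logisticFun_nonneg ..) fun _ _ => logisticFun_le_one ..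

lemma conjRBF_nonneg : 0 ≤ conjRBF y μ α :=
  prod_nonneg fun _ _ => rbfFun_nonneg ..

lemma conjRBF_le_rbfFun (i : Fin m) : conjRBF y μ α ≤ rbfFun (y i) (μ i) (α i) := by
  simpa [conjRBF] using prod_le_prod_of_subset_of_le_one (subset_univ {i})
    (fun _ _ => rbfFun_nonneg ..) fun _ _ _ => rbfFun_le_one ..

end Conjunctive

section ConjunctiveSteepening

variable {m : ℕ} {y μ α : Fin m → ℝ}

lemma expSmall_conjLog_mul_sub_max {μ' α' : Fin m → ℝ} (hα : ∀ i, 0 < α i)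
    (hα' : ∀ i, 0 < α' i) (hy : ∀ i, y i ≠ μ i) (hy' : ∀ i, y i ≠ μ' i) :
    ExpSmall fun t => conjLog y μ (fun i => t * α i) * conjLog y μ' (fun i => t * α' i)
      - conjLog y (fun i => max (μ i) (μ' i))
          (fun i => t * if μ' i ≤ μ i then α i else α' i) := by
  have hsum := ExpSmall.sum (univ : Finset (Fin m)) fun i _ =>
    (expSmall_logisticFun_mul_sub_max (hα i) (hα' i) (hy i) (hy' i)).abs
  refine hsum.of_abs_le fun t _ => ?_
  rw [conjLog, conjLog, conjLog, ← prod_mul_distrib]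
  refine le_trans ?_ (le_abs_self _)
  simp only [← Real.norm_eq_abs]
  refine norm_prod_sub_prod_le univ (fun i _ => ?_) fun i _ => ?_
  · rw [Real.norm_eq_abs,
      abs_of_nonneg (mul_nonneg (logisticFun_nonneg ..) (logisticFun_nonneg ..))]
    exact mul_le_one₀ (logisticFun_le_one ..) (logisticFun_nonneg ..) (logisticFun_le_one ..)
  · rw [Real.norm_eq_abs, abs_of_nonneg (logisticFun_nonneg ..)]
    exact logisticFun_le_one ..

lemma expSmall_conjRBF {i : Fin m} (hα : 0 < α i) (hy : y i ≠ μ i) :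
    ExpSmall fun t => conjRBF y μ (fun i => t * α i) :=
  (expSmall_rbfFun hα hy).of_abs_le fun t _ => by
    rw [abs_of_nonneg (conjRBF_nonneg ..), abs_of_nonneg (rbfFun_nonneg ..)]
    exact conjRBF_le_rbfFun y μ _ i

lemma expSmall_conjLog_mul_conjRBF_sub_decisionH (μ' α' : Fin m → ℝ) {i : Fin m}
    (hα : 0 < α i) (hy : y i ≠ μ i) :
    ExpSmall fun t => conjLog y μ' (fun i => t * α' i) * conjRBF y μ (fun i => t * α i)
      - decisionH y μ' (fun i => t * α' i) μ (fun i => t * α i) := by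
  have hP := expSmall_conjRBF hα hy
  refine (hP.of_abs_le fun t _ => ?_).sub (hP.of_abs_le fun t _ => ?_)
  · rw [abs_mul, abs_of_nonneg (conjLog_nonneg ..)]
    exact mul_le_of_le_one_left (abs_nonneg _) (conjLog_le_one ..)
  · unfold decisionH
    split_ifs <;> simp

end ConjunctiveSteepening

theorem bilinear_logistic_sum_exp_approx_general
    (m NL NR : ℕ) (hm : 0 < m)
    (wL : Fin m → Fin NL → ℝ) (wR : Fin m → Fin NR → ℝ)
    (μL : Fin NL → Fin m → ℝ) (μR : Fin NR → Fin m → ℝ)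
    (αL : Fin NL → Fin m → ℝ) (αR : Fin NR → Fin m → ℝ)
    (hαL : ∀ j i, 0 < αL j i) (hαR : ∀ k i, 0 < αR k i)
    (l : Fin NL) (y : Fin m → ℝ)
    (hyL : ∀ i j, y i ≠ μL j i) (hyR : ∀ i k, y i ≠ μR k i) :
    ∃ C c : ℝ, 0 < C ∧ 0 < c ∧ ∀ t : ℝ, 1 ≤ t →
      |((∑ i, ∑ j, t * αL l i * wL i j
            * (conjLog y (μL l) (fun i' => t * αL l i')
                * conjLog y (μL j) (fun i' => t * αL j i')))
          + ∑ i, ∑ k, t * αL l i * wR i k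
            * (conjLog y (μL l) (fun i' => t * αL l i')
                * conjRBF y (μR k) (fun i' => t * αR k i')))
        - ((∑ i, ∑ j, t * αL l i * wL i j
              * conjLog y (fun i' => max (μL l i') (μL j i'))
                  (fun i' => t * (if μL j i' ≤ μL l i' then αL l i' else αL j i')))
          + ∑ i, ∑ k, t * αL l i * wR i k
              * decisionH y (μL l) (fun i' => t * αL l i') (μR k) (fun i' => t * αR k i'))|
      ≤ C * Real.exp (-c * t) := by
  have hL (j : Fin NL) := expSmall_conjLog_mul_sub_max (hαL l) (hαL j)
    (fun i => hyL i l) (fun i => hyL i j)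
  have hR (k : Fin NR) := expSmall_conjLog_mul_conjRBF_sub_decisionH (μL l) (αL l)
    (hαR k ⟨0, hm⟩) (hyR ⟨0, hm⟩ k)
  have hsum := (ExpSmall.sum univ fun i _ => ExpSmall.sum univ fun j _ =>
      (hL j).id_mul.const_mul (αL l i * wL i j)).add
    (ExpSmall.sum univ fun i _ => ExpSmall.sum univ fun k _ =>
      (hR k).id_mul.const_mul (αL l i * wR i k))
  refine hsum.congr fun t => ?_
  simp only [Pi.add_apply, add_sub_add_comm, ← sum_sub_distrib, ← mul_sub]
  congr 1 <;> exact sum_congr rfl fun _ _ => sum_congr rfl fun _ _ => by ring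

theorem bilinear_logistic_sum_exp_approx
    (m NL NR : ℕ) (hm : 0 < m) (hNL : 0 < NL) (hNR : 0 < NR)
    (wL : Fin m → Fin NL → ℝ) (wR : Fin m → Fin NR → ℝ)
    (μL : Fin NL → Fin m → ℝ) (μR : Fin NR → Fin m → ℝ)
    (αL : Fin NL → Fin m → ℝ) (αR : Fin NR → Fin m → ℝ)
    (hαL : ∀ j i, 0 < αL j i) (hαR : ∀ k i, 0 < αR k i)
    (l : Fin NL) (y : Fin m → ℝ)
    (hyL : ∀ i j, y i ≠ μL j i) (hyR : ∀ i k, y i ≠ μR k i) :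
    ∃ C c : ℝ, 0 < C ∧ 0 < c ∧ ∀ t : ℝ, 1 ≤ t →
      |((∑ i, ∑ j, t * αL l i * wL i j
            * (conjLog y (μL l) (fun i' => t * αL l i')
                * conjLog y (μL j) (fun i' => t * αL j i')))
          + ∑ i, ∑ k, t * αL l i * wR i k
            * (conjLog y (μL l) (fun i' => t * αL l i')
                * conjRBF y (μR k) (fun i' => t * αR k i')))
        - ((∑ i, ∑ j, t * αL l i * wL i j
              * conjLog y (fun i' => max (μL l i') (μL j i'))
                  (fun i' => t * (if μL j i' ≤ μL l i' then αL l i' else αL j i')))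
          + ∑ i, ∑ k, t * αL l i * wR i k
              * decisionH y (μL l) (fun i' => t * αL l i') (μR k) (fun i' => t * αR k i'))|
      ≤ C * Real.exp (-c * t) :=
  bilinear_logistic_sum_exp_approx_general m NL NR hm wL wR μL μR αL αR hαL hαR l y hyL hyR
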